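/- Let j : U ↪ X be an open dense immersion with U regular, and suppose the motivic intersection complex j_{!*}1_U ∈ CHM(X) exists in the weaker sense (j^*j_{!*}1_U ≅ 1_U and the kernel of End(j_{!*}1_U) → End(1_U) is nilpotent). If M ∈ CHM(X) is such that 1_U is a direct summand of j^*M, then j_{!*}1_U is a direct summand of M. -/

import Mathlib

/-!
Lift the splitting `α, β` of `1_U` off `j^*M` along the full functor `j^*` to maps
`s : IM ⟶ M` and `r : M ⟶ IM`. Then `j^*(𝟙 - s ≫ r) = 0`, so `𝟙 - s ≫ r` is nilpotent and
`s ≫ r` is invertible; composing `r` with its inverse gives a retraction of `s`.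

Here `CHM(X)`, `CHM(U)` are abstract preadditive categories `CX`, `CU`, `j^*` is a full
additive functor `jstar`, `IM` stands for `j_{!*}1_U` and `oneU` for `1_U`.
-/

open CategoryTheory Category Limits

namespace CategoryTheory

variable {C D : Type*} [Category C] [Category D] [Preadditive C] [Preadditive D]
  (F : C ⥤ D) [F.Additive] {X Y : C}

theorem isIso_of_map_eq_id (hker : ∀ f : End X, F.map f = 0 → IsNilpotent f)
    {f : End X} (hf : F.map f = 𝟙 _) : IsIso f := by
  have hnil : IsNilpotent (1 - f) :=
    hker _ (by rw [End.one_def, F.map_sub, F.map_id, hf, sub_self])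
  rw [← isUnit_iff_isIso]
  simpa using hnil.isUnit_one_sub

noncomputable def Retract.ofMap [F.Full]
    (hker : ∀ f : End X, F.map f = 0 → IsNilpotent f)
    (h : Retract (F.obj X) (F.obj Y)) : Retract X Y :=
  have : IsIso (F.preimage h.i ≫ F.preimage h.r) := isIso_of_map_eq_id F hker (by simp)
  { i := F.preimage h.i
    r := F.preimage h.r ≫ inv (F.preimage h.i ≫ F.preimage h.r)
    retract := by rw [← assoc, IsIso.hom_inv_id] }

end CategoryTheory

theorem stmt14 {CX CU : Type*} [Category CX] [Category CU] [Preadditive CX] [Preadditive CU]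
    (jstar : CX ⥤ CU) [jstar.Additive] [jstar.Full]
    (IM M : CX) (oneU : CU)
    (e : jstar.obj IM ≅ oneU)
    (hker : ∀ f : End IM, jstar.map f = 0 → ∃ n : ℕ, f ^ n = 0)
    (hsummand : ∃ (α : oneU ⟶ jstar.obj M) (β : jstar.obj M ⟶ oneU), α ≫ β = 𝟙 oneU) :
    ∃ (s : IM ⟶ M) (r : M ⟶ IM), s ≫ r = 𝟙 IM := by
  obtain ⟨α, β, hβα⟩ := hsummand
  let h : Retract IM M := Retract.ofMap jstar hker ((Retract.ofIso e).trans ⟨α, β, hβα⟩)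
  exact ⟨h.i, h.r, h.retract⟩
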